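/- arXiv:1901.09136 — 2 statements merged into one kernel-verified Lean document; each statement's English description precedes it below -/
import Mathlib

section
/- If two probability distributions p and q on a finite set have the same marginals under M, and p is a Gibbs distribution p(x) = exp((Mᵀθ)(x))/Z, then H(q) ≤ H(p), with the gap equal to the KL divergence: H(p) − H(q) = KL(q ‖ p) whenever q is absolutely continuous with respect to p. -/
/-!
Since `log p = Mᵀθ - log Z` is affine in `Mᵀθ`, the cross entropy `-∑ q log p` depends on `q`
only through its total mass and, by adjointness, its marginals `M q`; so it is the same for `q`
and `p`, namely `H p`. Hence `H p - H q = ∑ q log q - ∑ q log p = KL(q ‖ p)`, which is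
nonnegative by Gibbs' inequality.
-/

open Real Finset

lemma mul_log_div_eq_sub {p : ℝ} (q : ℝ) (hp : p ≠ 0) :
    q * log (q / p) = q * log q - q * log p := by
  rcases eq_or_ne q 0 with rfl | hq
  · simp
  · rw [log_div hq hp, mul_sub]

lemma sub_le_mul_log_div {p q : ℝ} (hp : 0 < p) (hq : 0 ≤ q) : q - p ≤ q * log (q / p) := by
  -- `x - 1 ≤ x log x` at `x = q / p`, scaled by `p`
  have h := mul_le_mul_of_nonneg_left (self_sub_one_le_mul_log (div_nonneg hq hp.le)) hp.le
  rwa [mul_sub, mul_one, ← mul_assoc, mul_div_cancel₀ _ hp.ne'] at h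

section FinsetSums

variable {ι : Type*} (s : Finset ι)

theorem sum_mul_log_div_nonneg {p q : ι → ℝ} (hp : ∀ x ∈ s, 0 < p x) (hq : ∀ x ∈ s, 0 ≤ q x)
    (hpq : ∑ x ∈ s, p x = ∑ x ∈ s, q x) : 0 ≤ ∑ x ∈ s, q x * log (q x / p x) :=
  calc 0 = ∑ x ∈ s, (q x - p x) := by rw [sum_sub_distrib, hpq, sub_self]
    _ ≤ _ := sum_le_sum fun x hx => sub_le_mul_log_div (hp x hx) (hq x hx)

theorem sum_mul_log_div_eq_sub {p : ι → ℝ} (hp : ∀ x ∈ s, p x ≠ 0) (q : ι → ℝ) :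
    ∑ x ∈ s, q x * log (q x / p x) = ∑ x ∈ s, q x * log (q x) - ∑ x ∈ s, q x * log (p x) := by
  rw [← sum_sub_distrib]
  exact sum_congr rfl fun x hx => mul_log_div_eq_sub (q x) (hp x hx)

theorem sum_mul_log_eq_of_eq_exp_div {f p : ι → ℝ} {Z : ℝ} (hZ : Z ≠ 0)
    (hp : ∀ x, p x = exp (f x) / Z) (r : ι → ℝ) :
    ∑ x ∈ s, r x * log (p x) = ∑ x ∈ s, r x * f x - (∑ x ∈ s, r x) * log Z := by
  simp only [hp, log_div (exp_ne_zero _) hZ, log_exp, mul_sub, sum_sub_distrib, sum_mul]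

end FinsetSums

theorem gibbs_entropy_gap_eq_KL_general {X I : Type*} [Fintype X] [Fintype I]
    (M : (X → ℝ) →ₗ[ℝ] (I → ℝ)) (Mt : (I → ℝ) →ₗ[ℝ] (X → ℝ))
    (hadj : ∀ (r : X → ℝ) (θ : I → ℝ), ∑ i, M r i * θ i = ∑ x, r x * Mt θ x)
    (θ : I → ℝ) (Z : ℝ)
    (p : X → ℝ) (hp : ∀ x, p x = Real.exp (Mt θ x) / Z)
    (hp1 : ∑ x, p x = 1)
    (q : X → ℝ) (hq0 : ∀ x, 0 ≤ q x) (hq1 : ∑ x, q x = 1)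
    (hmarg : M q = M p) :
    (-∑ x, q x * Real.log (q x) ≤ -∑ x, p x * Real.log (p x)) ∧
    (-∑ x, p x * Real.log (p x)) - (-∑ x, q x * Real.log (q x))
      = ∑ x, q x * Real.log (q x / p x) := by
  have hZ : 0 < Z := by
    by_contra! hZ
    have : ∑ x, p x ≤ 0 :=
      sum_nonpos fun x _ => (hp x).symm ▸ div_nonpos_of_nonneg_of_nonpos (exp_pos _).le hZ
    linarith
  have hp_pos : ∀ x, 0 < p x := fun x => (hp x).symm ▸ div_pos (exp_pos _) hZ
  have hcross : ∑ x, q x * log (p x) = ∑ x, p x * log (p x) := by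
    rw [sum_mul_log_eq_of_eq_exp_div _ hZ.ne' hp, sum_mul_log_eq_of_eq_exp_div _ hZ.ne' hp,
      ← hadj, ← hadj, hmarg, hq1, hp1]
  have hgap : (-∑ x, p x * log (p x)) - (-∑ x, q x * log (q x))
      = ∑ x, q x * log (q x / p x) := by
    rw [sum_mul_log_div_eq_sub _ (fun x _ => (hp_pos x).ne'), hcross]
    ring
  refine ⟨?_, hgap⟩
  have hKL := sum_mul_log_div_nonneg univ (fun x _ => hp_pos x) (fun x _ => hq0 x)
    (hp1.trans hq1.symm)
  linarith

/-- If `p` is a Gibbs distribution `p x = exp ((Mᵀ θ) x) / Z` and `q` is any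
probability distribution with the same marginals under `M`, then
`H q ≤ H p`, and the entropy gap equals the KL divergence:
`H p - H q = KL(q ‖ p)` (here `p > 0`, so `q` is automatically absolutely
continuous with respect to `p`). -/
theorem gibbs_entropy_gap_eq_KL {X I : Type*} [Fintype X] [Fintype I]
    (M : (X → ℝ) →ₗ[ℝ] (I → ℝ)) (Mt : (I → ℝ) →ₗ[ℝ] (X → ℝ))
    (hadj : ∀ (r : X → ℝ) (θ : I → ℝ), ∑ i, M r i * θ i = ∑ x, r x * Mt θ x)
    (θ : I → ℝ) (Z : ℝ) (hZ : Z = ∑ x, Real.exp (Mt θ x))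
    (p : X → ℝ) (hp : ∀ x, p x = Real.exp (Mt θ x) / Z)
    (hp1 : ∑ x, p x = 1)
    (q : X → ℝ) (hq0 : ∀ x, 0 ≤ q x) (hq1 : ∑ x, q x = 1)
    (hmarg : M q = M p) :
    (-∑ x, q x * Real.log (q x) ≤ -∑ x, p x * Real.log (p x)) ∧
    (-∑ x, p x * Real.log (p x)) - (-∑ x, q x * Real.log (q x))
      = ∑ x, q x * Real.log (q x / p x) :=
  gibbs_entropy_gap_eq_KL_general M Mt hadj θ Z p hp hp1 q hq0 hq1 hmarg
end

section
/- If μ lies in the relative interior of the marginal polytope M(S) of a finite set X under linear map M, then there exists a strictly positive probability distribution p on X with M p = μ. -/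
/-!
The barycenter `u` of the simplex is strictly positive. Since `μ` is in the relative interior
of `M(S)` and `M u` lies in its affine hull, the segment from `M u` to `μ` can be prolonged a
little beyond `μ` inside `M(S)`, to some `M q` with `q ∈ S`. Then `μ` is a convex combination
of `M u` and `M q` with positive weight on `M u`, and the same combination of `u` and `q` is a
strictly positive distribution mapped to `μ`.
-/

open AffineMap Filter Topology

section IntrinsicInterior

variable {𝕜 V P : Type*} [Ring 𝕜] [TopologicalSpace 𝕜] [AddCommGroup V] [Module 𝕜 V]
  [TopologicalSpace V] [ContinuousSMul 𝕜 V] [AddTorsor V P] [TopologicalSpace P]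
  [IsTopologicalAddTorsor P] {s : Set P} {x y : P}

theorem eventually_lineMap_mem_of_mem_intrinsicInterior (hx : x ∈ intrinsicInterior 𝕜 s)
    (hy : y ∈ affineSpan 𝕜 s) : ∀ᶠ t in 𝓝 (1 : 𝕜), lineMap y x t ∈ s := by
  obtain ⟨w, hw, rfl⟩ := mem_intrinsicInterior.mp hx
  let g : 𝕜 → affineSpan 𝕜 s := fun t ↦ ⟨lineMap y w t, AffineMap.lineMap_mem t hy w.2⟩
  have hg : Continuous g := lineMap_continuous.subtype_mk _
  have hg_one : g 1 = w := Subtype.ext (lineMap_apply_one _ _)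
  exact hg.continuousAt.preimage_mem_nhds (hg_one ▸ mem_interior_iff_mem_nhds.mp hw)

end IntrinsicInterior

theorem exists_one_lt_lineMap_mem_of_mem_intrinsicInterior {V P : Type*} [AddCommGroup V]
    [Module ℝ V] [TopologicalSpace V] [ContinuousSMul ℝ V] [AddTorsor V P] [TopologicalSpace P]
    [IsTopologicalAddTorsor P] {s : Set P} {x y : P} (hx : x ∈ intrinsicInterior ℝ s)
    (hy : y ∈ affineSpan ℝ s) : ∃ t : ℝ, 1 < t ∧ lineMap y x t ∈ s :=
  (Eventually.and (self_mem_nhdsWithin (s := Set.Ioi (1 : ℝ)))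
    ((eventually_lineMap_mem_of_mem_intrinsicInterior hx hy).filter_mono nhdsWithin_le_nhds)).exists

theorem lineMap_pos {k : Type*} [Ring k] [PartialOrder k] [IsStrictOrderedRing k] {a b r : k}
    (ha : 0 < a) (hb : 0 ≤ b) (hr₀ : 0 ≤ r) (hr₁ : r < 1) : 0 < lineMap a b r :=
  calc (0 : k) = lineMap 0 0 r := (lineMap_same_apply 0 r).symm
    _ < lineMap a 0 r := lineMap_strict_mono_left ha hr₁
    _ ≤ lineMap a b r := lineMap_mono_right hb hr₀

theorem relint_marginal_polytope_strictly_positive_general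
    {X I : Type*} [Fintype X] [Nonempty X]
    (M : (X → ℝ) →ₗ[ℝ] (I → ℝ)) (μ : I → ℝ)
    (hμ : μ ∈ intrinsicInterior ℝ
      (M '' {p : X → ℝ | (∀ x, 0 ≤ p x) ∧ ∑ x, p x = 1})) :
    ∃ p : X → ℝ, (∀ x, 0 < p x) ∧ ∑ x, p x = 1 ∧ M p = μ := by
  change μ ∈ intrinsicInterior ℝ (M '' stdSimplex ℝ X) at hμ
  set u : stdSimplex ℝ X := stdSimplex.barycenter
  have hu_pos (x : X) : 0 < u.1 x := by simp [u, Fintype.card_pos]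
  obtain ⟨t, ht, q, hq, hMq⟩ := exists_one_lt_lineMap_mem_of_mem_intrinsicInterior hμ
    (subset_affineSpan ℝ _ ⟨u, u.2, rfl⟩)
  have ht₀ : 0 < t := one_pos.trans ht
  have hp : lineMap u.1 q t⁻¹ ∈ stdSimplex ℝ X :=
    (convex_stdSimplex ℝ X).lineMap_mem u.2 hq ⟨by positivity, inv_le_one_of_one_le₀ ht.le⟩
  refine ⟨lineMap u.1 q t⁻¹, fun x ↦ ?_, hp.2, ?_⟩
  · rw [pi_lineMap_apply]
    exact lineMap_pos (hu_pos x) (hq.1 x) (by positivity) (inv_lt_one_of_one_lt₀ ht)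
  · calc M (lineMap u.1 q t⁻¹) = lineMap (M u) (M q) t⁻¹ := M.toAffineMap.apply_lineMap _ _ _
      _ = lineMap (M u) μ (t⁻¹ * t) := by rw [hMq, lineMap_lineMap_right]
      _ = μ := by rw [inv_mul_cancel₀ ht₀.ne', lineMap_apply_one]

/-- If `μ` lies in the relative interior (intrinsic interior) of the marginal
polytope `M '' S`, then `μ` is the marginal vector of some strictly positive
probability distribution. -/
theorem relint_marginal_polytope_strictly_positive
    {X I : Type*} [Fintype X] [Fintype I] [Nonempty X]
    (M : (X → ℝ) →ₗ[ℝ] (I → ℝ)) (μ : I → ℝ)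
    (hμ : μ ∈ intrinsicInterior ℝ
      (M '' {p : X → ℝ | (∀ x, 0 ≤ p x) ∧ ∑ x, p x = 1})) :
    ∃ p : X → ℝ, (∀ x, 0 < p x) ∧ ∑ x, p x = 1 ∧ M p = μ :=
  relint_marginal_polytope_strictly_positive_general M μ hμ
end
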